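/- Let f, g : ℝ → ℝ be such that f − 1 and g − 1 are differentiable and square-integrable with square-integrable derivatives. Then lim_{y → +∞} ‖f − g(· + y)‖_{H¹}² = ‖f − 1‖_{H¹}² + ‖g − 1‖_{H¹}², and the same limit holds as y → −∞. -/

import Mathlib

open MeasureTheory Filter Topology

/-- The squared `H¹(ℝ)` norm, `‖u‖_{H¹}² = ∫ u² + ∫ (u')²`. -/
noncomputable def H1normSq (u : ℝ → ℝ) : ℝ :=
  (∫ x : ℝ, (u x) ^ 2) + ∫ x : ℝ, (deriv u x) ^ 2

/-!
Write `F = f - 1` and `G = g - 1`. Expanding the square,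
`‖F - G(· + y)‖²_{L²} = ‖F‖²_{L²} + ‖G‖²_{L²} - 2 ∫ F(x) G(x + y) dx`, and likewise for the
derivatives, so it suffices that the cross term `∫ F(x) G(x + y) dx` of two `L²` functions tends
to `0` as `|y| → ∞`. Split the integral at the ball `|x| < |y|/2`: inside it, `|x + y| ≥ |y|/2`,
so by Cauchy–Schwarz the integral is controlled by `‖F‖_{L²}` times the `L²` mass of `G` outside
the ball of radius `|y|/2`; outside it, by that of `F` times `‖G‖_{L²}`. Both tails vanish.
-/

theorem abs_integral_mul_le_sqrt_mul_sqrt {α : Type*} [MeasurableSpace α] {μ : Measure α}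
    {F G : α → ℝ} (hF : MemLp F 2 μ) (hG : MemLp G 2 μ) :
    |∫ x, F x * G x ∂μ| ≤ √(∫ x, F x ^ 2 ∂μ) * √(∫ x, G x ^ 2 ∂μ) := by
  have hF' : MemLp F (ENNReal.ofReal 2) μ := by simpa using hF
  have hG' : MemLp G (ENNReal.ofReal 2) μ := by simpa using hG
  have holder := integral_mul_norm_le_Lp_mul_Lq Real.HolderConjugate.two_two hF' hG'
  have norm_rpow_two : ∀ u : ℝ, ‖u‖ ^ (2 : ℝ) = u ^ 2 := fun u => by
    rw [Real.rpow_two, Real.norm_eq_abs, sq_abs]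
  simp only [norm_rpow_two, ← Real.sqrt_eq_rpow] at holder
  calc |∫ x, F x * G x ∂μ| ≤ ∫ x, ‖F x‖ * ‖G x‖ ∂μ := by
        simpa only [Real.norm_eq_abs, norm_mul] using
          norm_integral_le_integral_norm (fun x => F x * G x)
    _ ≤ _ := holder

theorem tendsto_setIntegral_compl_ball_atTop {X E : Type*} [PseudoMetricSpace X]
    [MeasurableSpace X] [OpensMeasurableSpace X] [NormedAddCommGroup E] [NormedSpace ℝ E]
    {μ : Measure X} {h : X → E} (hh : Integrable h μ) (x₀ : X) :
    Tendsto (fun r : ℝ => ∫ x in (Metric.ball x₀ r)ᶜ, h x ∂μ) atTop (𝓝 0) := by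
  have hanti : Antitone fun r : ℝ => (Metric.ball x₀ r)ᶜ :=
    fun _ _ hrs => Set.compl_subset_compl.2 (Metric.ball_subset_ball hrs)
  have hempty : ⋂ r : ℝ, (Metric.ball x₀ r)ᶜ = ∅ := by
    refine Set.eq_empty_of_forall_notMem fun x hx => ?_
    exact Set.mem_iInter.1 hx (dist x x₀ + 1) (Metric.mem_ball.2 (by linarith))
  simpa [hempty] using tendsto_setIntegral_of_antitone (μ := μ)
    (fun _ => Metric.isOpen_ball.measurableSet.compl) hanti ⟨0, hh.integrableOn⟩

section Translates

variable {E : Type*} [NormedAddCommGroup E] [MeasurableSpace E] [BorelSpace E]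
  {μ : Measure E} [μ.IsAddRightInvariant] {F G : E → ℝ}

theorem MeasureTheory.MemLp.comp_add_right (hG : MemLp G 2 μ) (y : E) :
    MemLp (fun x => G (x + y)) 2 μ :=
  hG.comp_measurePreserving (measurePreserving_add_right μ y)

theorem abs_integral_mul_comp_add_le (hF : MemLp F 2 μ) (hG : MemLp G 2 μ) (y : E) :
    |∫ x, F x * G (x + y) ∂μ| ≤
      √(∫ x, F x ^ 2 ∂μ) * √(∫ x in (Metric.ball 0 (‖y‖ / 2))ᶜ, G x ^ 2 ∂μ) +
        √(∫ x in (Metric.ball 0 (‖y‖ / 2))ᶜ, F x ^ 2 ∂μ) * √(∫ x, G x ^ 2 ∂μ) := by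
  set B := Metric.ball (0 : E) (‖y‖ / 2)
  have hB : MeasurableSet B := Metric.isOpen_ball.measurableSet
  have hGy := hG.comp_add_right y
  have hF2 := hF.integrable_sq
  have hGy2 := hGy.integrable_sq
  have hG2_shift : ∫ x, G (x + y) ^ 2 ∂μ = ∫ x, G x ^ 2 ∂μ :=
    integral_add_right_eq_self (fun x => G x ^ 2) y
  have inner_G : ∫ x in B, G (x + y) ^ 2 ∂μ ≤ ∫ x in Bᶜ, G x ^ 2 ∂μ := by
    calc ∫ x in B, G (x + y) ^ 2 ∂μ ≤ ∫ x in (· + y) ⁻¹' Bᶜ, G (x + y) ^ 2 ∂μ := by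
          refine setIntegral_mono_set hGy2.integrableOn
            (Eventually.of_forall fun _ => sq_nonneg _) (Eventually.of_forall fun x hx => ?_)
          have hxB : ‖x‖ < ‖y‖ / 2 := mem_ball_zero_iff.1 hx
          have htri : ‖y‖ ≤ ‖x + y‖ + ‖x‖ := by
            simpa using norm_sub_le (x + y) x
          show x + y ∈ Bᶜ
          simp only [B, Set.mem_compl_iff, mem_ball_zero_iff, not_lt]
          linarith
      _ = ∫ x in Bᶜ, G x ^ 2 ∂μ :=
          (measurePreserving_add_right μ y).setIntegral_preimage_emb
            (measurableEmbedding_addRight y) (fun x => G x ^ 2) Bᶜ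
  have inside : |∫ x in B, F x * G (x + y) ∂μ| ≤
      √(∫ x, F x ^ 2 ∂μ) * √(∫ x in Bᶜ, G x ^ 2 ∂μ) := by
    refine (abs_integral_mul_le_sqrt_mul_sqrt (hF.restrict B) (hGy.restrict B)).trans ?_
    exact mul_le_mul (Real.sqrt_le_sqrt
      (setIntegral_le_integral hF2 (Eventually.of_forall fun _ => sq_nonneg _)))
      (Real.sqrt_le_sqrt inner_G) (Real.sqrt_nonneg _) (Real.sqrt_nonneg _)
  have outside : |∫ x in Bᶜ, F x * G (x + y) ∂μ| ≤
      √(∫ x in Bᶜ, F x ^ 2 ∂μ) * √(∫ x, G x ^ 2 ∂μ) := by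
    refine (abs_integral_mul_le_sqrt_mul_sqrt (hF.restrict Bᶜ) (hGy.restrict Bᶜ)).trans ?_
    rw [← hG2_shift]
    exact mul_le_mul_of_nonneg_left (Real.sqrt_le_sqrt
      (setIntegral_le_integral hGy2 (Eventually.of_forall fun _ => sq_nonneg _)))
      (Real.sqrt_nonneg _)
  have hprod : Integrable (fun x => F x * G (x + y)) μ := hF.integrable_mul hGy
  rw [← integral_add_compl hB hprod]
  exact (abs_add_le _ _).trans (add_le_add inside outside)

theorem tendsto_integral_mul_comp_add_cocompact [ProperSpace E] (hF : MemLp F 2 μ)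
    (hG : MemLp G 2 μ) :
    Tendsto (fun y => ∫ x, F x * G (x + y) ∂μ) (cocompact E) (𝓝 0) := by
  have tail : ∀ {H : E → ℝ}, MemLp H 2 μ → Tendsto
      (fun y : E => √(∫ x in (Metric.ball 0 (‖y‖ / 2))ᶜ, H x ^ 2 ∂μ)) (cocompact E) (𝓝 0) :=
    fun hH => by
      have h := ((tendsto_setIntegral_compl_ball_atTop hH.integrable_sq 0).comp
        ((tendsto_norm_cocompact_atTop (E := E)).atTop_div_const two_pos)).sqrt
      rwa [Real.sqrt_zero] at h
  have bound_tendsto := ((tail hG).const_mul √(∫ x, F x ^ 2 ∂μ)).add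
    ((tail hF).mul_const √(∫ x, G x ^ 2 ∂μ))
  rw [mul_zero, zero_mul, add_zero] at bound_tendsto
  exact (tendsto_zero_iff_abs_tendsto_zero _).2 <|
    squeeze_zero (fun _ => abs_nonneg _) (abs_integral_mul_comp_add_le hF hG) bound_tendsto

theorem integral_sub_comp_add_sq (hF : MemLp F 2 μ) (hG : MemLp G 2 μ) (y : E) :
    ∫ x, (F x - G (x + y)) ^ 2 ∂μ =
      ∫ x, F x ^ 2 ∂μ + ∫ x, G x ^ 2 ∂μ - 2 * ∫ x, F x * G (x + y) ∂μ := by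
  have hGy := hG.comp_add_right y
  have hprod : Integrable (fun x => F x * G (x + y)) μ := hF.integrable_mul hGy
  have expand : ∀ x, (F x - G (x + y)) ^ 2 = F x ^ 2 + G (x + y) ^ 2 - 2 * (F x * G (x + y)) :=
    fun x => by ring
  have hsum : Integrable (fun x => F x ^ 2 + G (x + y) ^ 2) μ :=
    hF.integrable_sq.add hGy.integrable_sq
  simp_rw [expand]
  rw [integral_sub hsum (hprod.const_mul 2),
    integral_add hF.integrable_sq hGy.integrable_sq, integral_const_mul,
    integral_add_right_eq_self (fun x => G x ^ 2) y]

theorem tendsto_integral_sub_comp_add_sq_cocompact [ProperSpace E] (hF : MemLp F 2 μ)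
    (hG : MemLp G 2 μ) :
    Tendsto (fun y => ∫ x, (F x - G (x + y)) ^ 2 ∂μ) (cocompact E)
      (𝓝 (∫ x, F x ^ 2 ∂μ + ∫ x, G x ^ 2 ∂μ)) := by
  simp_rw [integral_sub_comp_add_sq hF hG]
  simpa using tendsto_const_nhds.sub
    ((tendsto_integral_mul_comp_add_cocompact hF hG).const_mul (2 : ℝ))

end Translates

theorem H1normSq_sub_comp_add {F G : ℝ → ℝ} (hF : Differentiable ℝ F) (hG : Differentiable ℝ G)
    (y : ℝ) :
    H1normSq (fun x => F x - G (x + y)) =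
      (∫ x, (F x - G (x + y)) ^ 2) + ∫ x, (deriv F x - deriv G (x + y)) ^ 2 := by
  have hderiv : ∀ x, deriv (fun x => F x - G (x + y)) x = deriv F x - deriv G (x + y) :=
    fun x => by
      have hGy : DifferentiableAt ℝ (fun x => G (x + y)) x :=
        (hG (x + y)).comp x (differentiableAt_id.add_const y)
      rw [deriv_fun_sub (hF x) hGy, deriv_comp_add_const]
  simp only [H1normSq, hderiv]

theorem stmt_7 (f g : ℝ → ℝ)
    (hf : Differentiable ℝ (fun x => f x - 1))
    (hf1 : Integrable (fun x => (f x - 1) ^ 2))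
    (hf2 : Integrable (fun x => (deriv (fun y => f y - 1) x) ^ 2))
    (hg : Differentiable ℝ (fun x => g x - 1))
    (hg1 : Integrable (fun x => (g x - 1) ^ 2))
    (hg2 : Integrable (fun x => (deriv (fun y => g y - 1) x) ^ 2)) :
    Tendsto (fun y : ℝ => H1normSq (fun x => f x - g (x + y))) atTop
      (𝓝 (H1normSq (fun x => f x - 1) + H1normSq (fun x => g x - 1))) ∧
    Tendsto (fun y : ℝ => H1normSq (fun x => f x - g (x + y))) atBot
      (𝓝 (H1normSq (fun x => f x - 1) + H1normSq (fun x => g x - 1))) := by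
  set F := fun x => f x - 1
  set G := fun x => g x - 1
  have hF := (memLp_two_iff_integrable_sq hf.continuous.aestronglyMeasurable).2 hf1
  have hG := (memLp_two_iff_integrable_sq hg.continuous.aestronglyMeasurable).2 hg1
  have hF' := (memLp_two_iff_integrable_sq (measurable_deriv F).aestronglyMeasurable).2 hf2
  have hG' := (memLp_two_iff_integrable_sq (measurable_deriv G).aestronglyMeasurable).2 hg2
  have hsub : ∀ y, (fun x => f x - g (x + y)) = fun x => F x - G (x + y) :=
    fun y => funext fun x => by simp only [F, G]; ring
  have key : Tendsto (fun y : ℝ => H1normSq (fun x => f x - g (x + y))) (cocompact ℝ)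
      (𝓝 (H1normSq F + H1normSq G)) := by
    simp_rw [hsub, H1normSq_sub_comp_add hf hg]
    convert (tendsto_integral_sub_comp_add_sq_cocompact hF hG).add
      (tendsto_integral_sub_comp_add_sq_cocompact hF' hG') using 2
    unfold H1normSq
    ring
  exact ⟨key.mono_left atTop_le_cocompact, key.mono_left atBot_le_cocompact⟩
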